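/- arXiv:patt-sol/9902002 — 5 statements merged into one kernel-verified Lean document; each statement's English description precedes it below -/
import Mathlib

section
/- Let d₁, d₃, d₄ be real, Φ(x) = tanh(x), ψ_ε(x) = (2/3)((d₁+d₃+d₄)Φ(x) + (3/5)d₄Φ(x)³), and r_{εε}(x) = (1/225)[−5(10(d₁+d₃)² + 40(d₁+d₃)d₄ + 39d₄²)Φ(x) + 8d₄(5(d₁+d₃)+8d₄)Φ(x)³ + 3d₄²Φ(x)⁵ + 12d₄(5(d₁+d₃)+8d₄)·x·Φ'(x)] + (1/3)d₁[2d₄Φ(x) − 3(d₁+d₃+2d₄)·x·Φ'(x)]·Φ'(x). Then lim_{x→+∞} (2r_{εε}(x) + ψ_ε(x)²) = 0 and lim_{x→-∞} (2r_{εε}(x) − ψ_ε(x)²) = 0. -/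
/-!
As `x → +∞`, `tanh x → 1` while `tanh' x = 1 - tanh² x = cosh⁻² x` and `x · tanh' x` decay
exponentially, so `ψ_ε` and `r_εε` tend to their values at `Φ = 1, Φ' = 0`; these satisfy
`r_εε(+∞) = -ψ_ε(+∞)² / 2`. Both `ψ_ε` and `r_εε` are odd, which turns the limit at `-∞` into
the one at `+∞`.
-/

/-- First-order phase correction ψ_ε. -/
noncomputable def psiEps (d₁ d₃ d₄ : ℝ) (x : ℝ) : ℝ :=
  (2/3) * ((d₁ + d₃ + d₄) * Real.tanh x + (3/5) * d₄ * Real.tanh x ^ 3)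

/-- Second-order amplitude correction r_εε. -/
noncomputable def rEpsEps (d₁ d₃ d₄ : ℝ) (x : ℝ) : ℝ :=
  (1/225) * (-5 * (10*(d₁+d₃)^2 + 40*(d₁+d₃)*d₄ + 39*d₄^2) * Real.tanh x
    + 8*d₄*(5*(d₁+d₃) + 8*d₄) * Real.tanh x ^ 3
    + 3*d₄^2 * Real.tanh x ^ 5
    + 12*d₄*(5*(d₁+d₃) + 8*d₄) * x * deriv Real.tanh x)
  + (1/3) * d₁ * (2*d₄*Real.tanh x - 3*(d₁+d₃+2*d₄) * x * deriv Real.tanh x)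
      * deriv Real.tanh x

open Real Filter Topology

namespace Real

lemma one_sub_tanh_eq_exp_neg_div_cosh (x : ℝ) : 1 - tanh x = exp (-x) / cosh x := by
  rw [tanh_eq_sinh_div_cosh, ← cosh_sub_sinh]
  field_simp [(cosh_pos x).ne']

lemma one_sub_tanh_sq (x : ℝ) : 1 - tanh x ^ 2 = (cosh x ^ 2)⁻¹ := by
  rw [tanh_eq_sinh_div_cosh]
  field_simp [(cosh_pos x).ne']
  linarith [cosh_sq_sub_sinh_sq x]

lemma hasDerivAt_tanh (x : ℝ) : HasDerivAt tanh (1 - tanh x ^ 2) x := by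
  have h := (hasDerivAt_sinh x).div (hasDerivAt_cosh x) (cosh_pos x).ne'
  rw [show sinh / cosh = tanh from funext fun y => (tanh_eq_sinh_div_cosh y).symm] at h
  refine h.congr_deriv ?_
  rw [one_sub_tanh_sq]
  field_simp [(cosh_pos x).ne']
  linarith [cosh_sq_sub_sinh_sq x]

lemma deriv_tanh : deriv tanh = fun x => 1 - tanh x ^ 2 :=
  funext fun x => (hasDerivAt_tanh x).deriv

lemma tendsto_tanh_atTop : Tendsto tanh atTop (𝓝 1) := by
  have h : Tendsto (fun x => exp (-x) / cosh x) atTop (𝓝 0) :=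
    squeeze_zero (fun x => by positivity)
      (fun x => div_le_self (exp_pos _).le (one_le_cosh x)) tendsto_exp_neg_atTop_nhds_zero
  simpa using ((tendsto_const_nhds (x := (1 : ℝ))).sub h).congr fun x => by
    rw [← one_sub_tanh_eq_exp_neg_div_cosh, sub_sub_cancel]

lemma tendsto_mul_one_sub_tanh_sq_atTop :
    Tendsto (fun x => x * (1 - tanh x ^ 2)) atTop (𝓝 0) := by
  have hexp : Tendsto (fun x => 2 * (x * exp (-x))) atTop (𝓝 0) := by
    simpa using (tendsto_pow_mul_exp_neg_atTop_nhds_zero 1).const_mul 2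
  refine squeeze_zero' ?_ ?_ hexp <;> filter_upwards [eventually_ge_atTop 0] with x hx
  · rw [one_sub_tanh_sq]
    positivity
  · have hcosh : exp x / 2 ≤ cosh x ^ 2 := calc
      exp x / 2 ≤ cosh x := by rw [cosh_eq]; linarith [exp_pos (-x)]
      _ ≤ cosh x ^ 2 := by nlinarith [one_le_cosh x]
    calc x * (1 - tanh x ^ 2) = x * (cosh x ^ 2)⁻¹ := by rw [one_sub_tanh_sq]
      _ ≤ x * (exp x / 2)⁻¹ := by gcongr
      _ = 2 * (x * exp (-x)) := by rw [exp_neg]; ring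

end Real

section HoleCorrections

variable (d₁ d₃ d₄ : ℝ)

lemma psiEps_neg (x : ℝ) : psiEps d₁ d₃ d₄ (-x) = -psiEps d₁ d₃ d₄ x := by
  simp only [psiEps, tanh_neg]
  ring

lemma rEpsEps_neg (x : ℝ) : rEpsEps d₁ d₃ d₄ (-x) = -rEpsEps d₁ d₃ d₄ x := by
  simp only [rEpsEps, deriv_tanh, tanh_neg]
  ring

lemma tendsto_psiEps_atTop :
    Tendsto (psiEps d₁ d₃ d₄) atTop (𝓝 (2 / 15 * (5 * (d₁ + d₃) + 8 * d₄))) := by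
  have h := (((tendsto_tanh_atTop.const_mul (d₁ + d₃ + d₄)).add
    ((tendsto_tanh_atTop.pow 3).const_mul (3 / 5 * d₄))).const_mul (2 / 3))
  unfold psiEps
  convert h using 2
  ring

lemma tendsto_rEpsEps_atTop :
    Tendsto (rEpsEps d₁ d₃ d₄) atTop (𝓝 (-(2 / 15 * (5 * (d₁ + d₃) + 8 * d₄)) ^ 2 / 2)) := by
  have hT := tendsto_tanh_atTop
  have hU := tendsto_mul_one_sub_tanh_sq_atTop
  have hV : Tendsto (fun x => 1 - tanh x ^ 2) atTop (𝓝 0) := by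
    simpa using (tendsto_const_nhds (x := (1 : ℝ))).sub (hT.pow 2)
  have h := (((((hT.const_mul (-5 * (10*(d₁+d₃)^2 + 40*(d₁+d₃)*d₄ + 39*d₄^2))).add
    ((hT.pow 3).const_mul (8*d₄*(5*(d₁+d₃) + 8*d₄)))).add
    ((hT.pow 5).const_mul (3*d₄^2))).add (hU.const_mul (12*d₄*(5*(d₁+d₃) + 8*d₄)))).const_mul
    (1/225)).add ((((hT.const_mul (2*d₄)).sub (hU.const_mul (3*(d₁+d₃+2*d₄)))).const_mul
    (1/3 * d₁)).mul hV)
  convert h using 1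
  · ext x
    simp only [rEpsEps, deriv_tanh]
    ring
  · congr 1
    ring

end HoleCorrections

/-- lim_{x→+∞} (2r_εε + ψ_ε²) = 0 and lim_{x→-∞} (2r_εε − ψ_ε²) = 0. -/
theorem rEpsEps_psiEps_limits (d₁ d₃ d₄ : ℝ) :
    Filter.Tendsto (fun x : ℝ => 2 * rEpsEps d₁ d₃ d₄ x + (psiEps d₁ d₃ d₄ x)^2)
      Filter.atTop (nhds 0) ∧
    Filter.Tendsto (fun x : ℝ => 2 * rEpsEps d₁ d₃ d₄ x - (psiEps d₁ d₃ d₄ x)^2)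
      Filter.atBot (nhds 0) := by
  have hTop : Tendsto (fun x => 2 * rEpsEps d₁ d₃ d₄ x + psiEps d₁ d₃ d₄ x ^ 2) atTop (𝓝 0) := by
    convert ((tendsto_rEpsEps_atTop d₁ d₃ d₄).const_mul 2).add
      ((tendsto_psiEps_atTop d₁ d₃ d₄).pow 2) using 2
    ring
  refine ⟨hTop, ?_⟩
  have hBot := (hTop.comp tendsto_neg_atBot_atTop).neg
  simp only [neg_zero] at hBot
  refine hBot.congr fun x => ?_
  simp only [Function.comp, rEpsEps_neg, psiEps_neg]
  ring
end

section
/- Let ξ > 0 be real, let √ξ denote the positive square root, and set μ_f = (ξ+1)/√ξ and μ_s = i(ξ−1)/√ξ. Define the vectors in ℂ⁴: v_f^± = (1, ξ, ±μ_f, ±ξμ_f)ᵀ and v_s^± = (1, −1/ξ, ±μ_s, ∓μ_s/ξ)ᵀ. Then the determinant of the 4×4 matrix with columns v_s^−, v_f^−, v_s^+, v_f^+ equals −4i(1+ξ²)²(1−ξ²)/ξ³. In particular this determinant is nonzero for all ξ > 0 with ξ ≠ 1. -/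
open Matrix

/-!
Writing `v^± = (w, ±μ w)` with `w_s = (1, -1/ξ)` and `w_f = (1, ξ)`, the matrix has the block form
`[[W, W], [-W M, W M]]` with `W = [w_s w_f]` and `M = diag(μ_s, μ_f)`, so its determinant is
`4 μ_s μ_f (det W)^2 = 4 μ_s μ_f (ξ + 1/ξ)^2`, while `μ_s μ_f = i (ξ^2 - 1) / ξ`.
-/

theorem det_pm_eigenvector_pairs {R : Type*} [CommRing R] (c d μ ν : R) :
    (of ![![1, c, -μ, -(c * μ)], ![1, d, -ν, -(d * ν)], ![1, c, μ, c * μ], ![1, d, ν, d * ν]]).det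
      = 4 * μ * ν * (d - c) ^ 2 := by
  rw [det_succ_row_zero, Fin.sum_univ_four]
  simp [det_fin_three, Fin.succAbove]
  ring

theorem nls_eigenvalue_product {ξ : ℝ} (hξ : 0 < ξ) :
    Complex.I * (((ξ - 1) / √ξ : ℝ) : ℂ) * (((ξ + 1) / √ξ : ℝ) : ℂ)
      = Complex.I * ((ξ : ℂ) ^ 2 - 1) / ξ := by
  have hsqrt : ((√ξ : ℝ) : ℂ) ^ 2 = ξ := by exact_mod_cast Real.sq_sqrt hξ.le
  have hsqrt0 : ((√ξ : ℝ) : ℂ) ≠ 0 := by exact_mod_cast (Real.sqrt_pos.2 hξ).ne'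
  push_cast
  rw [← hsqrt]
  field_simp
  ring

/-- With μ_f = (ξ+1)/√ξ, μ_s = i(ξ−1)/√ξ and eigenvectors v_f^±, v_s^±, the matrix
with columns v_s^−, v_f^−, v_s^+, v_f^+ has determinant −4i(1+ξ²)²(1−ξ²)/ξ³,
which is nonzero for ξ > 0, ξ ≠ 1. -/
theorem nls_evans_asymptotic_determinant (ξ : ℝ) (hξ : 0 < ξ) :
    let μf : ℂ := (((ξ + 1) / Real.sqrt ξ : ℝ) : ℂ)
    let μs : ℂ := Complex.I * (((ξ - 1) / Real.sqrt ξ : ℝ) : ℂ)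
    let vfp : Fin 4 → ℂ := ![1, (ξ : ℂ), μf, (ξ : ℂ) * μf]
    let vfm : Fin 4 → ℂ := ![1, (ξ : ℂ), -μf, -((ξ : ℂ) * μf)]
    let vsp : Fin 4 → ℂ := ![1, -1/(ξ : ℂ), μs, -(μs/(ξ : ℂ))]
    let vsm : Fin 4 → ℂ := ![1, -1/(ξ : ℂ), -μs, μs/(ξ : ℂ)]
    let A : Matrix (Fin 4) (Fin 4) ℂ := (Matrix.of ![vsm, vfm, vsp, vfp]).transpose
    A.det = -4 * Complex.I * (1 + (ξ : ℂ)^2)^2 * (1 - (ξ : ℂ)^2) / (ξ : ℂ)^3 ∧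
    (ξ ≠ 1 → A.det ≠ 0) := by
  intro μf μs vfp vfm vsp vsm A
  have hξ0 : (ξ : ℂ) ≠ 0 := by exact_mod_cast hξ.ne'
  have hA : A.det = 4 * μs * μf * ((ξ : ℂ) - -1 / ξ) ^ 2 := by
    rw [det_transpose, ← det_pm_eigenvector_pairs]
    congr 1
    ext i j
    fin_cases i <;> fin_cases j <;> simp [vsm, vfm, vsp, vfp] <;> ring
  have hdet : A.det = -4 * Complex.I * (1 + (ξ : ℂ)^2)^2 * (1 - (ξ : ℂ)^2) / (ξ : ℂ)^3 := by
    rw [hA, mul_assoc 4]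
    simp only [μs, μf]
    rw [nls_eigenvalue_product hξ]
    field_simp
    ring
  refine ⟨hdet, fun hξ1 => ?_⟩
  have hminus : 1 - (ξ : ℂ) ^ 2 ≠ 0 := by
    have hsq : ξ ^ 2 ≠ 1 := (pow_eq_one_iff_of_nonneg hξ.le two_ne_zero).not.2 hξ1
    exact_mod_cast sub_ne_zero.2 hsq.symm
  have hplus : 1 + (ξ : ℂ) ^ 2 ≠ 0 := by exact_mod_cast (by positivity : (1 + ξ ^ 2 : ℝ) ≠ 0)
  rw [hdet]
  simp [hξ0, hminus, hplus]
end

section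
/- Let α² = (√125 + 11)/2 and let μ > 0 be real. The cubic polynomial p(y) = y³ + y² − μy + μ has a repeated (real) root if and only if μ = α². Moreover, at μ = α² the repeated root is y₀ = (1+√5)/2. -/
/-!
Eliminating `μ = 3y² + 2y` between the cubic and its derivative leaves `-2y(y² - y - 1) = 0`,
so a double root is `0`, `φ` or `ψ`, and on these three points `3y² + 2y = y⁵`: the double
root `y` occurs exactly at `μ = y⁵`. Positivity of `μ` forces `y > 0`, i.e. `y = φ`, and
`φ⁵ = 5φ + 3 = (√125 + 11) / 2`.
-/

open Real goldenRatio

lemma sq_eq_self_add_one_iff {y : ℝ} : y ^ 2 = y + 1 ↔ y = φ ∨ y = ψ := by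
  have hfactor : y ^ 2 - (y + 1) = (y - φ) * (y - ψ) := by
    linear_combination y * goldenRatio_add_goldenConj - goldenRatio_mul_goldenConj
  rw [← sub_eq_zero, hfactor, mul_eq_zero, sub_eq_zero, sub_eq_zero]

lemma pow_five_of_sq_eq_self_add_one {y : ℝ} (hy : y ^ 2 = y + 1) : y ^ 5 = 5 * y + 3 := by
  linear_combination (y ^ 3 + y ^ 2 + 2 * y + 3) * hy

lemma goldenRatio_pow_five : φ ^ 5 = (√125 + 11) / 2 := by
  have h125 : √125 = 5 * √5 := by
    rw [show (125 : ℝ) = 5 ^ 2 * 5 by norm_num, sqrt_mul (by positivity), sqrt_sq (by norm_num)]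
  rw [pow_five_of_sq_eq_self_add_one goldenRatio_sq, h125, goldenRatio]
  ring

lemma cubic_double_root_iff_eliminated (μ y : ℝ) :
    (y ^ 3 + y ^ 2 - μ * y + μ = 0 ∧ 3 * y ^ 2 + 2 * y - μ = 0) ↔
      (y = 0 ∨ y ^ 2 = y + 1) ∧ μ = 3 * y ^ 2 + 2 * y := by
  constructor
  · rintro ⟨hp, hdp⟩
    have hroot : y * (y ^ 2 - (y + 1)) = 0 := by
      linear_combination (-1 / 2) * hp + ((y - 1) / 2) * hdp
    rw [mul_eq_zero, sub_eq_zero] at hroot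
    exact ⟨hroot, by linarith⟩
  · rintro ⟨hy, rfl⟩
    have hroot : y * (y ^ 2 - (y + 1)) = 0 := by
      rcases hy with rfl | hy
      · rw [zero_mul]
      · rw [hy, sub_self, mul_zero]
    exact ⟨by linear_combination -2 * hroot, by ring⟩

lemma cubic_double_root_iff (μ y : ℝ) :
    (y ^ 3 + y ^ 2 - μ * y + μ = 0 ∧ 3 * y ^ 2 + 2 * y - μ = 0) ↔
      (y = 0 ∨ y = φ ∨ y = ψ) ∧ μ = y ^ 5 := by
  rw [cubic_double_root_iff_eliminated, ← sq_eq_self_add_one_iff]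
  refine and_congr_right fun hy => ?_
  suffices 3 * y ^ 2 + 2 * y = y ^ 5 by rw [this]
  rcases hy with rfl | hy
  · norm_num
  · linear_combination 3 * hy - pow_five_of_sq_eq_self_add_one hy

/-- For μ > 0, the cubic y³ + y² − μy + μ has a repeated real root
(a real root at which the derivative 3y² + 2y − μ also vanishes)
iff μ = α² = (√125 + 11)/2, and then the repeated root is (1+√5)/2. -/
theorem cubic_saddle_node (μ : ℝ) (hμ : 0 < μ) :
    ((∃ y : ℝ, y^3 + y^2 - μ*y + μ = 0 ∧ 3*y^2 + 2*y - μ = 0)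
        ↔ μ = (Real.sqrt 125 + 11) / 2) ∧
    (μ = (Real.sqrt 125 + 11) / 2 →
      ∀ y : ℝ, (y^3 + y^2 - μ*y + μ = 0 ∧ 3*y^2 + 2*y - μ = 0) →
        y = (1 + Real.sqrt 5) / 2) := by
  simp only [cubic_double_root_iff, ← goldenRatio_pow_five]
  refine ⟨⟨?_, fun hμφ => ⟨φ, by simp, hμφ⟩⟩, ?_⟩
  · rintro ⟨y, hy, rfl⟩
    have hy_pos : 0 < y := (Odd.pow_pos_iff (by decide)).1 hμ
    rcases hy with rfl | rfl | rfl
    · exact absurd hy_pos (lt_irrefl 0)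
    · rfl
    · exact absurd hy_pos goldenConj_neg.not_gt
  · rintro rfl y ⟨-, hy⟩
    exact (Odd.pow_inj (by decide)).1 hy.symm
end

section
/- Let α² = (√125 + 11)/2 and let μ be real with 0 < μ < α². Then the cubic polynomial p(y) = y³ + y² − μy + μ has exactly one real root, that root is less than −1, and its two non-real roots form a complex conjugate pair whose common real part is positive. -/
/-!
For the golden ratio φ, α² = φ⁵ = 5φ + 3, and at μ = φ⁵ the cubic is (y - φ)²(y + 1 + 2φ).
Together with the form y²(y + 1) + μ(1 - y) this makes the cubic positive on [-1, ∞) for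
0 < μ < φ⁵, so every real root lies below -1. As the roots sum to -1, two distinct roots
a, b force the root -1 - a - b. Hence two distinct real roots would give a real root above 1;
the quotient by the real root r has no real root, since its two roots would be real roots
with sum -1 - r > 0; and for a non-real root z the real root -1 - 2 Re z is below -1.
-/

open Real goldenRatio

def evansCubic {K : Type*} [CommRing K] (μ y : K) : K := y ^ 3 + y ^ 2 - μ * y + μ

def evansQuotient {K : Type*} [CommRing K] (μ r y : K) : K := y ^ 2 + (r + 1) * y + (r ^ 2 + r - μ)

section Algebra

variable {K : Type*} [CommRing K]

theorem map_evansCubic {L : Type*} [CommRing L] (f : K →+* L) (μ y : K) :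
    f (evansCubic μ y) = evansCubic (f μ) (f y) := by
  simp only [evansCubic, map_add, map_sub, map_mul, map_pow]

theorem evansCubic_sub_evansCubic (μ r y : K) :
    evansCubic μ y - evansCubic μ r = (y - r) * evansQuotient μ r y := by
  unfold evansCubic evansQuotient; ring

theorem evansQuotient_neg_one_sub_sub (μ r y : K) :
    evansQuotient μ r (-1 - r - y) = evansQuotient μ r y := by
  unfold evansQuotient; ring

theorem evansCubic_eq_zero_of_evansQuotient {μ r y : K} (hr : evansCubic μ r = 0)
    (hy : evansQuotient μ r y = 0) : evansCubic μ y = 0 := by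
  simpa [hr, hy] using evansCubic_sub_evansCubic μ r y

theorem evansCubic_neg_one_sub_sub {μ r y : K} (hr : evansCubic μ r = 0)
    (hy : evansQuotient μ r y = 0) : evansCubic μ (-1 - r - y) = 0 :=
  evansCubic_eq_zero_of_evansQuotient hr (by rwa [evansQuotient_neg_one_sub_sub])

theorem evansCubic_third_root [IsDomain K] {μ a b : K} (ha : evansCubic μ a = 0)
    (hb : evansCubic μ b = 0) (hab : a ≠ b) : evansCubic μ (-1 - a - b) = 0 := by
  have hq : (b - a) * evansQuotient μ a b = 0 := by
    rw [← evansCubic_sub_evansCubic, ha, hb, sub_zero]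
  exact evansCubic_neg_one_sub_sub ha
    ((mul_eq_zero.mp hq).resolve_left (sub_ne_zero.mpr hab.symm))

/-- At a root `x` of `x² = x + 1`, `5x + 3 = x⁵` and the cubic has the double root `x`. -/
theorem evansCubic_five_mul_add_three {x : K} (hx : x ^ 2 = x + 1) (y : K) :
    evansCubic (5 * x + 3) y = (y - x) ^ 2 * (y + 1 + 2 * x) := by
  unfold evansCubic
  linear_combination (3 * y - 2 * x - 3) * hx

end Algebra

theorem sqrt_125_add_11_div_two : (√125 + 11) / 2 = 5 * φ + 3 := by
  rw [show (125 : ℝ) = 5 ^ 2 * 5 by norm_num, sqrt_mul (by norm_num), sqrt_sq (by norm_num)]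
  ring

theorem evansCubic_pos {μ y : ℝ} (hμ0 : 0 < μ) (hμ : μ < 5 * φ + 3) (hy : -1 ≤ y) :
    0 < evansCubic μ y := by
  have hsplit : evansCubic μ y = y ^ 2 * (y + 1) + μ * (1 - y) := by unfold evansCubic; ring
  rcases lt_trichotomy y 1 with hlt | rfl | hgt
  · have : 0 ≤ y ^ 2 * (y + 1) := mul_nonneg (sq_nonneg y) (by linarith)
    rw [hsplit]
    linarith [mul_pos hμ0 (sub_pos.mpr hlt)]
  · norm_num [evansCubic]
  · calc 0 ≤ (y - φ) ^ 2 * (y + 1 + 2 * φ) := by have := goldenRatio_pos; positivity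
      _ = evansCubic (5 * φ + 3) y := (evansCubic_five_mul_add_three goldenRatio_sq y).symm
      _ < evansCubic μ y := by
        unfold evansCubic; nlinarith [mul_lt_mul_of_pos_right hμ (sub_pos.mpr hgt)]

theorem exists_evansCubic_eq_zero {μ : ℝ} (hμ : 0 ≤ μ) : ∃ r : ℝ, evansCubic μ r = 0 := by
  have hc : ContinuousOn (evansCubic μ) (Set.Icc (-(2 + μ)) (-1)) := by
    unfold evansCubic; fun_prop
  have h0 : (0 : ℝ) ∈ Set.Icc (evansCubic μ (-(2 + μ))) (evansCubic μ (-1)) := by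
    constructor <;> unfold evansCubic <;> nlinarith
  obtain ⟨r, -, hr⟩ := intermediate_value_Icc (by linarith) hc h0
  exact ⟨r, hr⟩

theorem evansCubic_ofReal_eq_zero {μ y : ℝ} (hy : evansCubic μ y = 0) :
    evansCubic (μ : ℂ) (y : ℂ) = 0 := by
  simpa [hy] using (map_evansCubic Complex.ofRealHom μ y).symm

theorem evansCubic_conj_eq_zero {μ : ℝ} {z : ℂ} (hz : evansCubic (μ : ℂ) z = 0) :
    evansCubic (μ : ℂ) (starRingEnd ℂ z) = 0 := by
  simpa [hz] using (map_evansCubic (starRingEnd ℂ) (μ : ℂ) z).symm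

theorem evansCubic_re_eq_zero {μ : ℝ} {z : ℂ} (hz : evansCubic (μ : ℂ) z = 0) (him : z.im = 0) :
    evansCubic μ z.re = 0 := by
  have hre : (z.re : ℂ) = z := Complex.ext rfl (by simp [him])
  apply Complex.ofReal_injective
  simpa [hre, hz] using map_evansCubic Complex.ofRealHom μ z.re

section RootsBelowNegOne

variable {μ : ℝ}

theorem re_lt_neg_one_of_evansCubic_eq_zero (hneg : ∀ y : ℝ, evansCubic μ y = 0 → y < -1)
    {z : ℂ} (hz : evansCubic (μ : ℂ) z = 0) (him : z.im = 0) : z.re < -1 :=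
  hneg _ (evansCubic_re_eq_zero hz him)

theorem evansCubic_real_root_unique (hneg : ∀ y : ℝ, evansCubic μ y = 0 → y < -1)
    {a b : ℝ} (ha : evansCubic μ a = 0) (hb : evansCubic μ b = 0) : a = b := by
  by_contra hab
  linarith [hneg _ (evansCubic_third_root ha hb hab), hneg a ha, hneg b hb]

theorem exists_nonreal_evansCubic_root (hneg : ∀ y : ℝ, evansCubic μ y = 0 → y < -1)
    {r : ℝ} (hr : evansCubic μ r = 0) : ∃ z : ℂ, z.im ≠ 0 ∧ evansCubic (μ : ℂ) z = 0 := by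
  have hrC := evansCubic_ofReal_eq_zero hr
  obtain ⟨z, hz⟩ : ∃ z : ℂ, evansQuotient (μ : ℂ) r z = 0 := by
    obtain ⟨z, hz⟩ := exists_quadratic_eq_zero (one_ne_zero' ℂ)
      (IsAlgClosed.exists_eq_mul_self (discrim 1 ((r : ℂ) + 1) ((r : ℂ) ^ 2 + r - μ)))
    exact ⟨z, by unfold evansQuotient; linear_combination hz⟩
  refine ⟨z, fun him => ?_, evansCubic_eq_zero_of_evansQuotient hrC hz⟩
  -- both roots of the quotient would be real, with sum -1 - r > 0
  have hz_lt := re_lt_neg_one_of_evansCubic_eq_zero hneg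
    (evansCubic_eq_zero_of_evansQuotient hrC hz) him
  have hw_lt := re_lt_neg_one_of_evansCubic_eq_zero hneg
    (evansCubic_neg_one_sub_sub hrC hz) (by simp [him])
  simp only [Complex.sub_re, Complex.neg_re, Complex.one_re, Complex.ofReal_re] at hw_lt
  linarith [hneg r hr]

theorem re_pos_of_nonreal_evansCubic_root (hneg : ∀ y : ℝ, evansCubic μ y = 0 → y < -1)
    {z : ℂ} (hz : evansCubic (μ : ℂ) z = 0) (him : z.im ≠ 0) : 0 < z.re := by
  have hne : z ≠ starRingEnd ℂ z := fun h => him (Complex.conj_eq_iff_im.mp h.symm)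
  have hthird := re_lt_neg_one_of_evansCubic_eq_zero hneg
    (evansCubic_third_root hz (evansCubic_conj_eq_zero hz) hne) (by simp)
  simp only [Complex.sub_re, Complex.neg_re, Complex.one_re, Complex.conj_re] at hthird
  linarith

end RootsBelowNegOne

/-- For 0 < μ < α² = (√125+11)/2, the cubic y³ + y² − μy + μ has exactly one real
root, which is < −1; its two non-real roots form a complex conjugate pair with
positive real part. -/
theorem cubic_roots_below_saddle_node (μ : ℝ)
    (h1 : 0 < μ) (h2 : μ < (Real.sqrt 125 + 11) / 2) :
    (∃! y : ℝ, y^3 + y^2 - μ*y + μ = 0) ∧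
    (∀ y : ℝ, y^3 + y^2 - μ*y + μ = 0 → y < -1) ∧
    (∃ z : ℂ, z.im ≠ 0 ∧ z^3 + z^2 - (μ:ℂ)*z + (μ:ℂ) = 0) ∧
    (∀ z : ℂ, z^3 + z^2 - (μ:ℂ)*z + (μ:ℂ) = 0 → z.im ≠ 0 →
      0 < z.re ∧
      (starRingEnd ℂ z)^3 + (starRingEnd ℂ z)^2 - (μ:ℂ)*(starRingEnd ℂ z) + (μ:ℂ) = 0) := by
  rw [sqrt_125_add_11_div_two] at h2
  have hneg : ∀ y : ℝ, evansCubic μ y = 0 → y < -1 := fun y hy =>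
    lt_of_not_ge fun hy' => (evansCubic_pos h1 h2 hy').ne' hy
  obtain ⟨r, hr⟩ := exists_evansCubic_eq_zero h1.le
  exact ⟨⟨r, hr, fun y hy => evansCubic_real_root_unique hneg hy hr⟩, hneg,
    exists_nonreal_evansCubic_root hneg hr,
    fun z hz him => ⟨re_pos_of_nonreal_evansCubic_root hneg hz him, evansCubic_conj_eq_zero hz⟩⟩
end

section
/- Let d₁, d₃, d₄ be real and define the planar vector field F(k,κ) = (F₁(k,κ), F₂(k,κ)) by F₁(k,κ) = (2/3)κ[−(d₁+d₃)kκ − (6/5)d₄kκ³(1 + (5/3)k²)]·(1+k²) and F₂(k,κ) = [d₃(κ²−1) + d₄(κ⁴−1) + (d₃+2d₄)k²κ² + d₄k⁴κ⁴ − (1/2)d₁k²κ²]·κ − (k/(1+k²))·κ·F₁(k,κ). Then (k,κ) = (0,1) is an equilibrium of F, and the Jacobian matrix DF(0,1) has eigenvalues λ₁ = 2(d₃+2d₄) and λ₂ = −(2/3)(d₁+d₃+(6/5)d₄). -/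
open Filter Topology Matrix

/-!
Since `F₁(0, κ) = 0` for all `κ`, the Jacobian `DF(0,1)` is lower triangular, so its eigenvalues
are its diagonal entries `∂F₁/∂k` and `∂F₂/∂κ`. Each of these is the derivative, at a zero `a`,
of a function of the form `(x - a) · g(x)`, and that derivative is simply `g(a)`.
-/

theorem hasDerivAt_sub_smul_of_continuousAt {𝕜 F : Type*} [NontriviallyNormedField 𝕜]
    [NormedAddCommGroup F] [NormedSpace 𝕜 F] {g : 𝕜 → F} {a : 𝕜} (hg : ContinuousAt g a) :
    HasDerivAt (fun x => (x - a) • g x) (g a) a := by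
  rw [hasDerivAt_iff_tendsto_slope]
  refine (hg.tendsto.mono_left nhdsWithin_le_nhds).congr' ?_
  filter_upwards [self_mem_nhdsWithin] with x hx
  rw [slope_def_module, sub_self, zero_smul, sub_zero, smul_smul,
    inv_mul_cancel₀ (sub_ne_zero.mpr hx), one_smul]

theorem det_smul_one_sub_lowerTriangular_fin_two {R : Type*} [CommRing R] (t a c d : R) :
    (t • (1 : Matrix (Fin 2) (Fin 2) R) - !![a, 0; c, d]).det = (t - a) * (t - d) := by
  simp [det_fin_two]

/-- The adiabatic slow-time vector field F has an equilibrium at (k,κ) = (0,1),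
and its Jacobian there has eigenvalues 2(d₃+2d₄) and −(2/3)(d₁+d₃+(6/5)d₄). -/
theorem adiabatic_linearization (d₁ d₃ d₄ : ℝ) :
    let F₁ : ℝ → ℝ → ℝ := fun k κ =>
      (2/3) * κ * (-(d₁ + d₃)*k*κ - (6/5)*d₄*k*κ^3*(1 + (5/3)*k^2)) * (1 + k^2)
    let F₂ : ℝ → ℝ → ℝ := fun k κ =>
      (d₃*(κ^2 - 1) + d₄*(κ^4 - 1) + (d₃ + 2*d₄)*k^2*κ^2 + d₄*k^4*κ^4
        - (1/2)*d₁*k^2*κ^2) * κ - (k/(1 + k^2)) * κ * F₁ k κ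
    let J : Matrix (Fin 2) (Fin 2) ℝ :=
      !![deriv (fun k => F₁ k 1) 0, deriv (fun κ => F₁ 0 κ) 1;
         deriv (fun k => F₂ k 1) 0, deriv (fun κ => F₂ 0 κ) 1]
    F₁ 0 1 = 0 ∧ F₂ 0 1 = 0 ∧
    ∀ t : ℝ, (t • (1 : Matrix (Fin 2) (Fin 2) ℝ) - J).det
      = (t - 2*(d₃ + 2*d₄)) * (t - (-(2/3)*(d₁ + d₃ + (6/5)*d₄))) := by
  intro F₁ F₂ J
  have hF₁_k : deriv (fun k => F₁ k 1) 0 = -(2/3)*(d₁ + d₃ + (6/5)*d₄) := by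
    have hfactor : (fun k => F₁ k 1) = fun k => (k - 0) •
        ((2/3) * (-(d₁ + d₃) - (6/5)*d₄*(1 + (5/3)*k^2)) * (1 + k^2)) := by
      funext k; simp only [F₁, smul_eq_mul]; ring
    rw [hfactor, (hasDerivAt_sub_smul_of_continuousAt (by fun_prop)).deriv]
    ring
  have hF₁_κ : deriv (fun κ => F₁ 0 κ) 1 = 0 := by
    simp [F₁]
  have hF₂_κ : deriv (fun κ => F₂ 0 κ) 1 = 2*(d₃ + 2*d₄) := by
    have hfactor : (fun κ => F₂ 0 κ) =
        fun κ => (κ - 1) • ((κ + 1) * (d₃ + d₄*(κ^2 + 1)) * κ) := by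
      funext κ; simp only [F₂, F₁, smul_eq_mul]; ring
    rw [hfactor, (hasDerivAt_sub_smul_of_continuousAt (by fun_prop)).deriv]
    ring
  refine ⟨by simp [F₁], by simp [F₂, F₁], fun t => ?_⟩
  simp only [J, hF₁_κ]
  rw [det_smul_one_sub_lowerTriangular_fin_two, hF₁_k, hF₂_κ]
  ring
end
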